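/- Concentration of |C_O| (Chebyshev step of Claim 5.5): Fix n ≥ 1 and pairwise disjoint finite alphabets Σ₁,…,Σₙ with Σ := Σ₁ ∪ ⋯ ∪ Σₙ, where |Σ| > 2n. Let C ⊆ Σ₁ × ⋯ × Σₙ be a nonempty code with d := |C|, and suppose that for every l ∈ {1,…,n−1}, the probability over two independent uniformly random codewords c, c' of C that Δ(c,c') = n − l is at most (n/|Σ|)^l. Then, for a uniformly random oracle O : Σ → {0,1}, Pr[ | |C_O| − d·2^{-n} | ≥ d·2^{-n}/2 ] ≤ 4·( 2ⁿ/d + 2n/(|Σ| − 2n) ); in particular, |C_O| ≥ d·2^{-n}/2 with probability at least 1 − 4·( 2ⁿ/d + 2n/(|Σ| − 2n) ). -/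

import Mathlib

open Finset
open scoped Classical

variable {Sym : Type}

/-- `C_O := {c ∈ C : O(c₁) = ⋯ = O(cₙ) = 0}`. -/
def codeZero {n : ℕ} [DecidableEq Sym] (C : Finset (Fin n → Sym)) (O : Sym → Bool) :
    Finset (Fin n → Sym) :=
  C.filter fun c => ∀ i, O (c i) = false

/-- The Hamming distance `Δ(c, c')`: the number of coordinates where `c` and `c'` differ. -/
def hamDist {n : ℕ} [DecidableEq Sym] (c c' : Fin n → Sym) : ℕ :=
  (Finset.univ.filter fun i : Fin n => c i ≠ c' i).card

/-- Probability of an event under a uniformly random oracle `O : Σ → {0,1}`. -/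
noncomputable def prOracle [Fintype Sym] (p : (Sym → Bool) → Prop) : ℝ :=
  ((Finset.univ.filter fun O : Sym → Bool => p O).card : ℝ) / (Fintype.card (Sym → Bool))

/-- Expectation of a real quantity under a uniformly random oracle `O : Σ → {0,1}`. -/
noncomputable def expOracle [Fintype Sym] (f : (Sym → Bool) → ℝ) : ℝ :=
  (∑ O : Sym → Bool, f O) / (Fintype.card (Sym → Bool))

lemma filter_allFalse_card [Fintype Sym] [DecidableEq Sym] (S : Finset Sym) :
    (Finset.univ.filter fun O : Sym → Bool => ∀ x ∈ S, O x = false).card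
      = 2 ^ (Fintype.card Sym - S.card) := by
  have h : (Finset.univ.filter fun O : Sym → Bool => ∀ x ∈ S, O x = false)
      = Fintype.piFinset (fun x => if x ∈ S then ({false} : Finset Bool) else Finset.univ) := by
    ext O
    simp only [mem_filter, mem_univ, true_and, Fintype.mem_piFinset]
    constructor
    · intro h x; by_cases hx : x ∈ S <;> simp [hx, h x]
    · intro h x hx; have := h x; simp [hx] at this; exact this
  rw [h, Fintype.card_piFinset]
  have : ∀ x : Sym, (if x ∈ S then ({false} : Finset Bool) else Finset.univ).card
      = if x ∈ S then 1 else 2 := by intro x; split <;> simp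
  simp only [this]
  rw [Finset.prod_ite, Finset.prod_const, Finset.prod_const]
  have h1 : Finset.univ.filter (fun x => x ∈ S) = S := by ext x; simp
  have h2 : Finset.univ.filter (fun x => ¬ x ∈ S) = Sᶜ := by ext x; simp
  rw [h1, h2, Finset.card_compl, one_pow, one_mul]

lemma sum_indicator_allFalse [Fintype Sym] [DecidableEq Sym] (S : Finset Sym) :
    ∑ O : Sym → Bool, (if ∀ x ∈ S, O x = false then (1:ℝ) else 0)
      = 2 ^ (Fintype.card Sym - S.card) := by
  rw [Finset.sum_boole, filter_allFalse_card]
  push_cast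
  ring

lemma code_inj {n : ℕ} [DecidableEq Sym] {A : Fin n → Finset Sym}
    (hdisj : ∀ i j : Fin n, i ≠ j → Disjoint (A i) (A j))
    {c : Fin n → Sym} (hc : ∀ i, c i ∈ A i) : Function.Injective c := by
  intro i j hij
  by_contra hne
  exact (Finset.disjoint_left.mp (hdisj i j hne) (hc i)) (hij ▸ hc j)

lemma code_img_card {n : ℕ} [DecidableEq Sym] {A : Fin n → Finset Sym}
    (hdisj : ∀ i j : Fin n, i ≠ j → Disjoint (A i) (A j))
    {c : Fin n → Sym} (hc : ∀ i, c i ∈ A i) :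
    (Finset.image c Finset.univ).card = n := by
  rw [Finset.card_image_of_injective _ (code_inj hdisj hc)]
  simp

lemma code_union_card {n : ℕ} [DecidableEq Sym] {A : Fin n → Finset Sym}
    (hdisj : ∀ i j : Fin n, i ≠ j → Disjoint (A i) (A j))
    {c c' : Fin n → Sym} (hc : ∀ i, c i ∈ A i) (hc' : ∀ i, c' i ∈ A i) :
    (Finset.image c Finset.univ ∪ Finset.image c' Finset.univ).card = n + hamDist c c' := by
  have hsd : Finset.image c' Finset.univ \ Finset.image c Finset.univ
      = Finset.image c' (Finset.univ.filter fun i : Fin n => c i ≠ c' i) := by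
    ext x
    simp only [Finset.mem_sdiff, Finset.mem_image, Finset.mem_filter, Finset.mem_univ, true_and]
    constructor
    · rintro ⟨⟨i, rfl⟩, hx⟩
      exact ⟨i, fun h => hx ⟨i, h⟩, rfl⟩
    · rintro ⟨i, hne, rfl⟩
      refine ⟨⟨i, rfl⟩, ?_⟩
      rintro ⟨j, hj⟩
      by_cases hij : j = i
      · exact hne (hij ▸ hj)
      · exact (Finset.disjoint_left.mp (hdisj j i hij) (hc j)) (hj ▸ hc' i)
  have : (Finset.image c Finset.univ ∪ Finset.image c' Finset.univ).card
      = (Finset.image c' Finset.univ \ Finset.image c Finset.univ).card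
        + (Finset.image c Finset.univ).card := by
    rw [Finset.card_sdiff_add_card, Finset.union_comm]
  rw [this, hsd, Finset.card_image_of_injective _ (code_inj hdisj hc'),
    code_img_card hdisj hc, hamDist, add_comm]

lemma sum_ind_single {n : ℕ} [Fintype Sym] [DecidableEq Sym] {c : Fin n → Sym}
    (himg : (Finset.image c Finset.univ).card = n) :
    ∑ O : Sym → Bool, (if ∀ i, O (c i) = false then (1:ℝ) else 0)
      = 2 ^ (Fintype.card Sym - n) := by
  have h : ∀ O : Sym → Bool, (∀ i, O (c i) = false) ↔
      ∀ x ∈ Finset.image c Finset.univ, O x = false := by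
    intro O
    constructor
    · rintro h x hx
      obtain ⟨i, -, rfl⟩ := Finset.mem_image.mp hx
      exact h i
    · intro h i
      exact h _ (Finset.mem_image_of_mem _ (Finset.mem_univ i))
  simp only [h]
  rw [sum_indicator_allFalse, himg]

lemma sum_ind_pair {n : ℕ} [Fintype Sym] [DecidableEq Sym] {c c' : Fin n → Sym}
    (huni : (Finset.image c Finset.univ ∪ Finset.image c' Finset.univ).card = n + k) :
    ∑ O : Sym → Bool, (if ∀ i, O (c i) = false then (1:ℝ) else 0)
        * (if ∀ i, O (c' i) = false then (1:ℝ) else 0)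
      = 2 ^ (Fintype.card Sym - (n + k)) := by
  have h : ∀ O : Sym → Bool,
      (if ∀ i, O (c i) = false then (1:ℝ) else 0) * (if ∀ i, O (c' i) = false then (1:ℝ) else 0)
      = (if ∀ x ∈ Finset.image c Finset.univ ∪ Finset.image c' Finset.univ, O x = false
          then (1:ℝ) else 0) := by
    intro O
    have heq : ((∀ i, O (c i) = false) ∧ ∀ i, O (c' i) = false) ↔
        ∀ x ∈ Finset.image c Finset.univ ∪ Finset.image c' Finset.univ, O x = false := by
      constructor
      · rintro ⟨h1, h2⟩ x hx
        rcases Finset.mem_union.mp hx with hx | hx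
        · obtain ⟨i, -, rfl⟩ := Finset.mem_image.mp hx; exact h1 i
        · obtain ⟨i, -, rfl⟩ := Finset.mem_image.mp hx; exact h2 i
      · intro h
        exact ⟨fun i => h _ (Finset.mem_union_left _ (Finset.mem_image_of_mem _ (Finset.mem_univ i))),
          fun i => h _ (Finset.mem_union_right _ (Finset.mem_image_of_mem _ (Finset.mem_univ i)))⟩
    simp only [show (∀ x ∈ Finset.image c Finset.univ ∪ Finset.image c' Finset.univ, O x = false)
      = ((∀ i, O (c i) = false) ∧ ∀ i, O (c' i) = false) from (iff_iff_eq.mp heq).symm]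
    by_cases h1 : ∀ i, O (c i) = false <;> by_cases h2 : ∀ i, O (c' i) = false <;>
      simp [h1, h2]
  simp only [h]
  rw [sum_indicator_allFalse, huni]

lemma codeZero_card_eq {n : ℕ} [DecidableEq Sym] (C : Finset (Fin n → Sym)) (O : Sym → Bool) :
    ((codeZero C O).card : ℝ) = ∑ c ∈ C, (if ∀ i, O (c i) = false then (1:ℝ) else 0) := by
  rw [codeZero, Finset.card_filter]
  push_cast
  rfl

lemma sum_X {n : ℕ} [Fintype Sym] [DecidableEq Sym] {C : Finset (Fin n → Sym)}
    (himg : ∀ c ∈ C, (Finset.image c Finset.univ).card = n) :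
    ∑ O : Sym → Bool, ((codeZero C O).card : ℝ)
      = C.card * 2 ^ (Fintype.card Sym - n) := by
  simp only [codeZero_card_eq]
  rw [Finset.sum_comm]
  rw [Finset.sum_congr rfl fun c hc => sum_ind_single (himg c hc)]
  rw [Finset.sum_const, nsmul_eq_mul]

lemma sum_X2 {n : ℕ} [Fintype Sym] [DecidableEq Sym] {C : Finset (Fin n → Sym)}
    (huni : ∀ c ∈ C, ∀ c' ∈ C,
      (Finset.image c Finset.univ ∪ Finset.image c' Finset.univ).card = n + hamDist c c') :
    ∑ O : Sym → Bool, ((codeZero C O).card : ℝ) ^ 2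
      = ∑ p ∈ C ×ˢ C, (2:ℝ) ^ (Fintype.card Sym - (n + hamDist p.1 p.2)) := by
  have h : ∀ O : Sym → Bool, ((codeZero C O).card : ℝ) ^ 2
      = ∑ p ∈ C ×ˢ C, (if ∀ i, O (p.1 i) = false then (1:ℝ) else 0)
          * (if ∀ i, O (p.2 i) = false then (1:ℝ) else 0) := by
    intro O
    rw [codeZero_card_eq, sq, Finset.sum_mul_sum, Finset.sum_product]
  simp only [h]
  rw [Finset.sum_comm]
  exact Finset.sum_congr rfl fun p hp => sum_ind_pair
    (huni p.1 (Finset.mem_product.mp hp).1 p.2 (Finset.mem_product.mp hp).2)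

lemma geom_tail_le {r : ℝ} (h0 : 0 ≤ r) (h1 : r < 1) (m : ℕ) :
    ∑ i ∈ Finset.range m, r ^ (i + 1) ≤ r / (1 - r) := by
  have hne : r ≠ 1 := ne_of_lt h1
  have hpos : 0 < 1 - r := by linarith
  have hsum : ∑ i ∈ Finset.range m, r ^ i = (1 - r ^ m) / (1 - r) := by
    rw [geom_sum_eq hne]
    rw [div_eq_div_iff (by linarith) (by linarith)]
    ring
  have h2 : ∑ i ∈ Finset.range m, r ^ (i + 1) = r * ∑ i ∈ Finset.range m, r ^ i := by
    rw [Finset.mul_sum]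
    exact Finset.sum_congr rfl fun i _ => by ring
  rw [h2, hsum]
  have hr : (0:ℝ) ≤ r ^ m := pow_nonneg h0 m
  rw [mul_div_assoc' , div_le_div_iff₀ hpos hpos]
  nlinarith [mul_nonneg (mul_nonneg h0 hpos.le) hr]

lemma prodDiag_card {n : ℕ} [DecidableEq Sym] (C : Finset (Fin n → Sym)) :
    ((C ×ˢ C).filter fun p => p.1 = p.2).card = C.card := by
  have h : (C ×ˢ C).filter (fun p => p.1 = p.2) = C.image fun c => (c, c) := by
    ext p
    simp only [Finset.mem_filter, Finset.mem_product, Finset.mem_image]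
    constructor
    · rintro ⟨⟨h1, h2⟩, h3⟩
      obtain ⟨a, b⟩ := p
      simp only at h3
      subst h3
      exact ⟨a, h1, rfl⟩
    · rintro ⟨c, hc, rfl⟩
      exact ⟨⟨hc, hc⟩, rfl⟩
  rw [h, Finset.card_image_of_injective]
  intro a b hab
  exact congrArg Prod.fst hab

lemma hamDist_le {n : ℕ} [DecidableEq Sym] (c c' : Fin n → Sym) : hamDist c c' ≤ n := by
  calc hamDist c c' ≤ (Finset.univ : Finset (Fin n)).card := Finset.card_filter_le _ _
  _ = n := by simp

lemma hamDist_eq_zero {n : ℕ} [DecidableEq Sym] {c c' : Fin n → Sym}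
    (h : hamDist c c' = 0) : c = c' := by
  funext i
  by_contra hne
  have : i ∈ Finset.univ.filter fun i : Fin n => c i ≠ c' i := by simp [hne]
  rw [hamDist, Finset.card_eq_zero] at h
  simp [h] at this

lemma pairs_sum_bound {n : ℕ} [Fintype Sym] [DecidableEq Sym] (hn : 1 ≤ n)
    (hbig : 2 * n < Fintype.card Sym)
    (C : Finset (Fin n → Sym)) (hCne : C.Nonempty)
    (hhw : ∀ l : ℕ, 1 ≤ l → l ≤ n - 1 →
      (((C ×ˢ C).filter fun p => hamDist p.1 p.2 = n - l).card : ℝ) /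
          ((C.card : ℝ) * (C.card : ℝ)) ≤
        ((n : ℝ) / (Fintype.card Sym : ℝ)) ^ l) :
    ∑ p ∈ C ×ˢ C, ((2:ℝ) ^ (Fintype.card Sym) / 2 ^ (n + hamDist p.1 p.2)
        - (2:ℝ) ^ (Fintype.card Sym) / 2 ^ (2 * n))
      ≤ 2 ^ (Fintype.card Sym) * ((C.card : ℝ) / 2 ^ n
        + (C.card : ℝ) ^ 2 / 2 ^ (2 * n) * (2 * n / ((Fintype.card Sym : ℝ) - 2 * n))) := by
  set N := Fintype.card Sym with hN
  have hNpos : 0 < N := by omega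
  have hNR : (0:ℝ) < N := by exact_mod_cast hNpos
  have hgap : (0:ℝ) < (N:ℝ) - 2 * n := by
    have : (2 * n : ℝ) < N := by exact_mod_cast hbig
    push_cast at this ⊢; linarith
  set d : ℝ := (C.card : ℝ) with hd
  have hdpos : (0:ℝ) < d := by rw [hd]; exact_mod_cast hCne.card_pos
  set r : ℝ := 2 * n / N with hr
  have hr0 : 0 ≤ r := by positivity
  have hr1 : r < 1 := by
    rw [hr, div_lt_one hNR]
    exact_mod_cast hbig
  set K : ℝ := 2 ^ N * d ^ 2 / 2 ^ (2 * n) with hK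
  have hKpos : 0 < K := by positivity
  set B : ℕ → ℝ := fun l => if l = n then d * 2 ^ N / 2 ^ n else if l = 0 then 0 else K * r ^ l
    with hB
  set f : (Fin n → Sym) × (Fin n → Sym) → ℝ := fun p =>
    (2:ℝ) ^ N / 2 ^ (n + hamDist p.1 p.2) - (2:ℝ) ^ N / 2 ^ (2 * n) with hf
  -- fiber decomposition
  have hmaps : ∀ p ∈ C ×ˢ C, n - hamDist p.1 p.2 ∈ Finset.range (n + 1) := by
    intro p _; simp only [Finset.mem_range]; omega
  have hfib := Finset.sum_fiberwise_of_maps_to hmaps f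
  rw [← hfib]
  -- bound each fiber
  have hfiber : ∀ l ∈ Finset.range (n + 1),
      ∑ p ∈ (C ×ˢ C).filter fun p => n - hamDist p.1 p.2 = l, f p ≤ B l := by
    intro l hl
    rw [Finset.mem_range] at hl
    by_cases hln : l = n
    · -- diagonal case
      have hsub : ((C ×ˢ C).filter fun p => n - hamDist p.1 p.2 = l)
          ⊆ (C ×ˢ C).filter fun p => p.1 = p.2 := by
        intro p hp
        rw [Finset.mem_filter] at hp ⊢
        refine ⟨hp.1, ?_⟩
        have := hamDist_le p.1 p.2
        have h0 : hamDist p.1 p.2 = 0 := by omega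
        exact hamDist_eq_zero h0
      have hterm : ∀ p ∈ (C ×ˢ C).filter fun p => n - hamDist p.1 p.2 = l,
          f p ≤ 2 ^ N / 2 ^ n := by
        intro p _
        rw [hf]
        have h1 : (2:ℝ) ^ N / 2 ^ (n + hamDist p.1 p.2) ≤ 2 ^ N / 2 ^ n := by
          apply div_le_div_of_nonneg_left (by positivity) (by positivity)
          apply pow_le_pow_right₀ (by norm_num)
          omega
        have h2 : (0:ℝ) ≤ 2 ^ N / 2 ^ (2 * n) := by positivity
        simp only
        linarith
      calc ∑ p ∈ (C ×ˢ C).filter fun p => n - hamDist p.1 p.2 = l, f p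
          ≤ ∑ p ∈ (C ×ˢ C).filter fun p => n - hamDist p.1 p.2 = l, (2:ℝ) ^ N / 2 ^ n :=
            Finset.sum_le_sum hterm
        _ = ((C ×ˢ C).filter fun p => n - hamDist p.1 p.2 = l).card * (2 ^ N / 2 ^ n) := by
            rw [Finset.sum_const, nsmul_eq_mul]
        _ ≤ d * (2 ^ N / 2 ^ n) := by
            apply mul_le_mul_of_nonneg_right _ (by positivity)
            rw [hd, ← prodDiag_card C]
            exact_mod_cast Finset.card_le_card hsub
        _ = B l := by simp only [hB, if_pos hln]; ring
    by_cases hl0 : l = 0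
    · -- zero case : all terms are 0
      subst hl0
      have : ∀ p ∈ (C ×ˢ C).filter fun p => n - hamDist p.1 p.2 = 0, f p = 0 := by
        intro p hp
        rw [Finset.mem_filter] at hp
        have := hamDist_le p.1 p.2
        have hΔ : hamDist p.1 p.2 = n := by omega
        rw [hf]
        simp only [hΔ]
        rw [show n + n = 2 * n by ring, sub_self]
      rw [Finset.sum_eq_zero this, hB]
      simp [hln]
    · -- middle case : 1 ≤ l ≤ n - 1
      have hl1 : 1 ≤ l := by omega
      have hln1 : l ≤ n - 1 := by omega
      have hsub : ((C ×ˢ C).filter fun p => n - hamDist p.1 p.2 = l)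
          ⊆ (C ×ˢ C).filter fun p => hamDist p.1 p.2 = n - l := by
        intro p hp
        rw [Finset.mem_filter] at hp ⊢
        have := hamDist_le p.1 p.2
        exact ⟨hp.1, by omega⟩
      have hcount : (((C ×ˢ C).filter fun p => hamDist p.1 p.2 = n - l).card : ℝ)
          ≤ d * d * ((n : ℝ) / N) ^ l := by
        have := hhw l hl1 hln1
        rw [div_le_iff₀ (by positivity)] at this
        calc (((C ×ˢ C).filter fun p => hamDist p.1 p.2 = n - l).card : ℝ)
            ≤ ((n : ℝ) / N) ^ l * (d * d) := this
          _ = d * d * ((n : ℝ) / N) ^ l := by ring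
      have hterm : ∀ p ∈ (C ×ˢ C).filter fun p => n - hamDist p.1 p.2 = l,
          f p ≤ 2 ^ N * 2 ^ l / 2 ^ (2 * n) := by
        intro p hp
        rw [Finset.mem_filter] at hp
        have hle := hamDist_le p.1 p.2
        have hΔ : hamDist p.1 p.2 = n - l := by omega
        have hexp : (n + hamDist p.1 p.2) + l = 2 * n := by omega
        have hkey : (2:ℝ) ^ (2 * n) = 2 ^ (n + hamDist p.1 p.2) * 2 ^ l := by
          rw [← pow_add]
          congr 1
          omega
        have h1 : (2:ℝ) ^ N / 2 ^ (n + hamDist p.1 p.2) = 2 ^ N * 2 ^ l / 2 ^ (2 * n) := by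
          rw [div_eq_div_iff (by positivity) (by positivity), hkey]
          ring
        rw [hf]
        simp only
        rw [h1]
        have : (0:ℝ) ≤ 2 ^ N / 2 ^ (2 * n) := by positivity
        linarith
      calc ∑ p ∈ (C ×ˢ C).filter fun p => n - hamDist p.1 p.2 = l, f p
          ≤ ∑ p ∈ (C ×ˢ C).filter fun p => n - hamDist p.1 p.2 = l,
              (2:ℝ) ^ N * 2 ^ l / 2 ^ (2 * n) := Finset.sum_le_sum hterm
        _ = ((C ×ˢ C).filter fun p => n - hamDist p.1 p.2 = l).card
              * (2 ^ N * 2 ^ l / 2 ^ (2 * n)) := by rw [Finset.sum_const, nsmul_eq_mul]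
        _ ≤ (d * d * ((n : ℝ) / N) ^ l) * (2 ^ N * 2 ^ l / 2 ^ (2 * n)) := by
            apply mul_le_mul_of_nonneg_right _ (by positivity)
            calc (((C ×ˢ C).filter fun p => n - hamDist p.1 p.2 = l).card : ℝ)
                ≤ (((C ×ˢ C).filter fun p => hamDist p.1 p.2 = n - l).card : ℝ) := by
                  exact_mod_cast Finset.card_le_card hsub
              _ ≤ d * d * ((n : ℝ) / N) ^ l := hcount
        _ = K * r ^ l := by
            simp only [hK, hr, div_pow, mul_pow]
            field_simp
        _ = B l := by simp only [hB, if_neg hln, if_neg hl0]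
  have htot : ∑ l ∈ Finset.range (n + 1), ∑ p ∈ (C ×ˢ C).filter
        fun p => n - hamDist p.1 p.2 = l, f p ≤ ∑ l ∈ Finset.range (n + 1), B l :=
    Finset.sum_le_sum hfiber
  refine le_trans htot ?_
  -- compute sum of B
  have hBn : ∑ l ∈ Finset.range (n + 1), B l
      = d * 2 ^ N / 2 ^ n + ∑ i ∈ Finset.range (n - 1), K * r ^ (i + 1) := by
    rw [Finset.sum_range_succ]
    have h1 : B n = d * 2 ^ N / 2 ^ n := by simp only [hB, if_pos rfl]
    have h2 : Finset.range n = Finset.range ((n - 1) + 1) := by congr 1; omega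
    rw [h1, h2, Finset.sum_range_succ']
    have h3 : B 0 = 0 := by
      have hz : ¬ (0 = n) := by omega
      simp only [hB, if_neg hz]
      simp
    have h4 : ∀ i ∈ Finset.range (n - 1), B (i + 1) = K * r ^ (i + 1) := by
      intro i hi
      rw [Finset.mem_range] at hi
      simp only [hB, if_neg (by omega : ¬ (i + 1 = n)), if_neg (by omega : ¬ (i + 1 = 0))]
    rw [h3, Finset.sum_congr rfl h4]
    ring
  rw [hBn]
  have hgeo : ∑ i ∈ Finset.range (n - 1), K * r ^ (i + 1) ≤ K * (r / (1 - r)) := by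
    rw [← Finset.mul_sum]
    exact mul_le_mul_of_nonneg_left (geom_tail_le hr0 hr1 _) hKpos.le
  have hrid : r / (1 - r) = 2 * n / ((N : ℝ) - 2 * n) := by
    have hne2 : ((N : ℝ) - 2 * n) ≠ 0 := ne_of_gt hgap
    have hne1 : (1 : ℝ) - r ≠ 0 := by
      rw [hr]
      intro h
      apply hne2
      field_simp at h
      linarith
    rw [hr] at hne1 ⊢
    field_simp
  refine le_trans (by linarith : d * 2 ^ N / 2 ^ n + ∑ i ∈ Finset.range (n - 1), K * r ^ (i + 1)
      ≤ d * 2 ^ N / 2 ^ n + K * (r / (1 - r))) ?_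
  rw [hrid, hK]
  apply le_of_eq
  ring


lemma cheb_ratio {α : Type} [Fintype α] (p : α → Prop) [DecidablePred p]
    (f : α → ℝ) (μ t : ℝ) (ht : 0 < t)
    (hp : ∀ x, p x → t ≤ |f x - μ|) :
    ((Finset.univ.filter p).card : ℝ) ≤ (∑ x : α, (f x - μ) ^ 2) / t ^ 2 := by
  rw [le_div_iff₀ (by positivity)]
  calc ((Finset.univ.filter p).card : ℝ) * t ^ 2
      = ∑ _x ∈ Finset.univ.filter p, t ^ 2 := by rw [Finset.sum_const, nsmul_eq_mul]
    _ ≤ ∑ x ∈ Finset.univ.filter p, (f x - μ) ^ 2 := by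
        refine Finset.sum_le_sum fun x hx => ?_
        rw [Finset.mem_filter] at hx
        have h1 := hp x hx.2
        calc t ^ 2 ≤ |f x - μ| ^ 2 := by nlinarith [abs_nonneg (f x - μ)]
          _ = (f x - μ) ^ 2 := sq_abs _
    _ ≤ ∑ x : α, (f x - μ) ^ 2 :=
        Finset.sum_le_sum_of_subset_of_nonneg (Finset.subset_univ _) fun x _ _ => sq_nonneg _

lemma count_lower {α : Type} [Fintype α] (p q : α → Prop) [DecidablePred p] [DecidablePred q]
    (h : ∀ x, ¬ q x → p x) :
    (Fintype.card α : ℝ) - ((Finset.univ.filter q).card : ℝ)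
      ≤ ((Finset.univ.filter p).card : ℝ) := by
  have hsub : Finset.univ \ Finset.univ.filter q ⊆ Finset.univ.filter p := by
    intro x hx
    rw [Finset.mem_sdiff, Finset.mem_filter] at hx
    rw [Finset.mem_filter]
    exact ⟨Finset.mem_univ _, h x fun hq => hx.2 ⟨Finset.mem_univ _, hq⟩⟩
  have h1 : (Finset.univ \ Finset.univ.filter q).card
      = Fintype.card α - (Finset.univ.filter q).card := by
    rw [Finset.card_sdiff_of_subset (Finset.subset_univ _), Finset.card_univ]
  have h2 : ((Finset.univ \ Finset.univ.filter q).card : ℝ)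
      ≤ ((Finset.univ.filter p).card : ℝ) := by exact_mod_cast Finset.card_le_card hsub
  have h3 : (Finset.univ.filter q).card ≤ Fintype.card α := by
    rw [← Finset.card_univ]; exact Finset.card_le_card (Finset.subset_univ _)
  rw [h1, Nat.cast_sub h3] at h2
  exact h2

lemma sum_sq_sub {α : Type} [Fintype α] (f : α → ℝ) (μ : ℝ) :
    ∑ x : α, (f x - μ) ^ 2
      = ∑ x : α, (f x) ^ 2 - 2 * μ * (∑ x : α, f x) + (Fintype.card α : ℝ) * μ ^ 2 := by
  have h : ∀ x : α, (f x - μ) ^ 2 = (f x) ^ 2 - 2 * μ * f x + μ ^ 2 := fun x => by ring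
  simp only [h]
  rw [Finset.sum_add_distrib, Finset.sum_sub_distrib, ← Finset.mul_sum, Finset.sum_const,
    nsmul_eq_mul, Finset.card_univ]


/-- **Concentration of |C_O|** (Chebyshev step of Claim 5.5). Under the hypotheses of the
variance bound, for a uniformly random oracle `O : Σ → {0,1}`,
`Pr[ | |C_O| − d·2^{-n} | ≥ d·2^{-n}/2 ] ≤ 4·(2ⁿ/d + 2n/(|Σ| − 2n))`; in particular
`|C_O| ≥ d·2^{-n}/2` with probability at least `1 − 4·(2ⁿ/d + 2n/(|Σ| − 2n))`. -/
theorem codeZero_concentration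
    {n : ℕ} (hn : 1 ≤ n) [Fintype Sym] [DecidableEq Sym]
    (A : Fin n → Finset Sym)
    (hdisj : ∀ i j : Fin n, i ≠ j → Disjoint (A i) (A j))
    (hcover : ∀ x : Sym, ∃ i, x ∈ A i)
    (hbig : 2 * n < Fintype.card Sym)
    (C : Finset (Fin n → Sym)) (hCne : C.Nonempty) (hC : ∀ c ∈ C, ∀ i, c i ∈ A i)
    (hhw : ∀ l : ℕ, 1 ≤ l → l ≤ n - 1 →
      (((C ×ˢ C).filter fun p => hamDist p.1 p.2 = n - l).card : ℝ) /
          ((C.card : ℝ) * (C.card : ℝ)) ≤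
        ((n : ℝ) / (Fintype.card Sym : ℝ)) ^ l) :
    prOracle (fun O : Sym → Bool =>
        (C.card : ℝ) / 2 ^ n / 2 ≤ |((codeZero C O).card : ℝ) - (C.card : ℝ) / 2 ^ n|) ≤
      4 * ((2 : ℝ) ^ n / (C.card : ℝ) + 2 * (n : ℝ) / ((Fintype.card Sym : ℝ) - 2 * n)) ∧
    1 - 4 * ((2 : ℝ) ^ n / (C.card : ℝ) + 2 * (n : ℝ) / ((Fintype.card Sym : ℝ) - 2 * n)) ≤
      prOracle (fun O : Sym → Bool =>
        (C.card : ℝ) / 2 ^ n / 2 ≤ ((codeZero C O).card : ℝ)) := by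
  classical
  set N := Fintype.card Sym with hN
  have hNpos : 0 < N := by omega
  have hgap : (0:ℝ) < (N : ℝ) - 2 * n := by
    have : ((2 * n : ℕ) : ℝ) < ((N : ℕ) : ℝ) := by exact_mod_cast hbig
    push_cast at this; linarith
  have hdnat : 0 < C.card := hCne.card_pos
  have hdpos : (0:ℝ) < (C.card : ℝ) := by exact_mod_cast hdnat
  have hcardFun : (Fintype.card (Sym → Bool) : ℝ) = 2 ^ N := by
    rw [Fintype.card_fun, Fintype.card_bool]; push_cast; rfl
  have h2N : (0:ℝ) < 2 ^ N := by positivity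
  have h2n : (0:ℝ) < (2:ℝ) ^ n := by positivity
  -- basic facts about codewords
  have himg : ∀ c ∈ C, (Finset.image c Finset.univ).card = n :=
    fun c hc => code_img_card hdisj (hC c hc)
  have huni : ∀ c ∈ C, ∀ c' ∈ C,
      (Finset.image c Finset.univ ∪ Finset.image c' Finset.univ).card = n + hamDist c c' :=
    fun c hc c' hc' => code_union_card hdisj (hC c hc) (hC c' hc')
  set μ : ℝ := (C.card : ℝ) / 2 ^ n with hμ
  have hμpos : 0 < μ := by positivity
  set X : (Sym → Bool) → ℝ := fun O => ((codeZero C O).card : ℝ) with hX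
  -- first moment
  have hsum1 : ∑ O : Sym → Bool, X O = (C.card : ℝ) * 2 ^ (N - n) := sum_X himg
  have hpowsub : ∀ k : ℕ, k ≤ N → (2:ℝ) ^ (N - k) = 2 ^ N / 2 ^ k := by
    intro k hk
    rw [eq_div_iff (by positivity), ← pow_add]
    congr 1
    omega
  have hnN : n ≤ N := by omega
  have hsum1' : ∑ O : Sym → Bool, X O = (C.card : ℝ) * 2 ^ N / 2 ^ n := by
    rw [hsum1, hpowsub n hnN]; ring
  -- second moment
  have hsum2 : ∑ O : Sym → Bool, (X O) ^ 2
      = ∑ p ∈ C ×ˢ C, (2:ℝ) ^ (N - (n + hamDist p.1 p.2)) := sum_X2 huni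
  have hsum2' : ∑ O : Sym → Bool, (X O) ^ 2
      = ∑ p ∈ C ×ˢ C, (2:ℝ) ^ N / 2 ^ (n + hamDist p.1 p.2) := by
    rw [hsum2]
    refine Finset.sum_congr rfl fun p hp => ?_
    have h1 : hamDist p.1 p.2 ≤ n := hamDist_le p.1 p.2
    exact hpowsub _ (by omega)
  -- variance
  have hvar : ∑ O : Sym → Bool, (X O - μ) ^ 2
      = ∑ p ∈ C ×ˢ C, ((2:ℝ) ^ N / 2 ^ (n + hamDist p.1 p.2) - (2:ℝ) ^ N / 2 ^ (2 * n)) := by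
    rw [sum_sq_sub, hsum1', hsum2', hcardFun]
    rw [Finset.sum_sub_distrib, Finset.sum_const, nsmul_eq_mul, Finset.card_product]
    have h2npow : (2:ℝ) ^ (2 * n) = 2 ^ n * 2 ^ n := by rw [two_mul, pow_add]
    push_cast
    rw [hμ, h2npow]
    field_simp
    ring
  have hvarbound : ∑ O : Sym → Bool, (X O - μ) ^ 2
      ≤ 2 ^ N * ((C.card : ℝ) / 2 ^ n
        + (C.card : ℝ) ^ 2 / 2 ^ (2 * n) * (2 * n / ((N : ℝ) - 2 * n))) := by
    rw [hvar]
    exact pairs_sum_bound hn hbig C hCne hhw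
  -- final bound
  set Q : ℝ := 2 * n / ((N : ℝ) - 2 * n) with hQ
  have hQ0 : 0 ≤ Q := by positivity
  set bound : ℝ := 4 * ((2 : ℝ) ^ n / (C.card : ℝ) + Q) with hbound
  have hkey : 2 ^ N * ((C.card : ℝ) / 2 ^ n + (C.card : ℝ) ^ 2 / 2 ^ (2 * n) * Q)
      = bound * 2 ^ N * (μ / 2) ^ 2 := by
    have h2npow : (2:ℝ) ^ (2 * n) = 2 ^ n * 2 ^ n := by rw [two_mul, pow_add]
    rw [hbound, hμ, h2npow]
    field_simp
    ring
  have hvarbound2 : ∑ O : Sym → Bool, (X O - μ) ^ 2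
      ≤ 2 ^ N * ((C.card : ℝ) / 2 ^ n + (C.card : ℝ) ^ 2 / 2 ^ (2 * n) * Q) := by
    rw [hQ]
    exact hvarbound
  have hfinal1 : (∑ O : Sym → Bool, (X O - μ) ^ 2) / (μ / 2) ^ 2 ≤ bound * 2 ^ N := by
    rw [div_le_iff₀ (by positivity)]
    exact le_trans hvarbound2 (le_of_eq hkey)
  have hbase : Fintype.card (Sym → Bool) = 2 ^ N := by
    rw [Fintype.card_fun, Fintype.card_bool]
  have hcN : ∀ I : Fintype (Sym → Bool), @Fintype.card _ I = 2 ^ N := by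
    intro I
    convert hbase using 2
  have hXO : ∀ O : Sym → Bool, ((codeZero C O).card : ℝ) = X O := fun O => by rw [hX]
  have hq : ∀ (I : Fintype (Sym → Bool))
      (D : DecidablePred (fun O : Sym → Bool => μ / 2 ≤ |((codeZero C O).card : ℝ) - μ|)),
      ((@Finset.filter _ _ D (@Finset.univ _ I)).card : ℝ) ≤ bound * 2 ^ N := by
    have hq0 : ((Finset.univ.filter (fun O : Sym → Bool =>
        μ / 2 ≤ |((codeZero C O).card : ℝ) - μ|)).card : ℝ) ≤ bound * 2 ^ N := by
      refine le_trans (cheb_ratio _ _ _ _ (half_pos hμpos) (fun x hx => hx)) ?_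
      simp only [hXO]
      exact hfinal1
    intro I D
    convert hq0 using 3
    congr!
  constructor
  · rw [prOracle]
    simp only [hcN]
    push_cast
    rw [div_le_iff₀ h2N]
    exact hq _ _
  · rw [prOracle]
    simp only [hcN]
    push_cast
    rw [le_div_iff₀ h2N]
    have himp : ∀ O : Sym → Bool, ¬ (μ / 2 ≤ |((codeZero C O).card : ℝ) - μ|) →
        μ / 2 ≤ ((codeZero C O).card : ℝ) := by
      intro O h1
      push_neg at h1
      have h2 := abs_lt.mp h1
      linarith [h2.1]
    have hgood0 : (1 - bound) * 2 ^ N ≤ (((Finset.univ.filter (fun O : Sym → Bool =>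
        μ / 2 ≤ ((codeZero C O).card : ℝ))).card : ℕ) : ℝ) := by
      refine le_trans ?_ (count_lower _ _ himp)
      have h1 := hq inferInstance inferInstance
      have h2 : ((Fintype.card (Sym → Bool) : ℕ) : ℝ) = 2 ^ N := by
        rw [hcN]
        push_cast
        ring
      linarith [h1, h2.ge, h2.le]
    convert hgood0 using 3
    congr!
    ext O
    simp
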